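/- (Existence of a robust network) Let d, k ≥ 1 with d ≥ 2 and 6 · ln d < √d, and let μ : Fin k → ℝ^d be orthogonal equinorm cluster features with binary cluster labels s. Then the feature-decoupled network f_dec is (√d / 3)-robust: the probability over (J, ξ) ~ (uniform on Fin k) ⊗ γ_d that sgn(f_dec(μ_J + ξ + ρ)) = s J holds for every perturbation ρ ∈ ℝ^d with ‖ρ‖ ≤ √d / 3 is at least 1 − 2k · d^{−(ln d)/2}. -/

import Mathlib

/-!
If every `|⟪μ j, ξ⟫|` is below `√d * log d < d / 6` and `‖ρ‖ ≤ √d / 3`, so that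
`|⟪μ j, ρ⟫| ≤ d / 3`, then at `x = μ J + ξ + ρ` the neuron of the true cluster `J` is active
while all other neurons are off, hence `fDec` has sign `s J`. Each `⟪μ j, ξ⟫` is `N(0, d)`, so
the Chernoff bound makes each of these `k` events fail with probability at most
`2 exp (-(log d) ^ 2 / 2) = 2 d ^ (-log d / 2)`, and a union bound finishes.
-/

open MeasureTheory ProbabilityTheory Real Finset
open scoped RealInnerProductSpace

/-- The standard Gaussian measure on `ℝ^d`. -/
noncomputable def stdGaussian (d : ℕ) : Measure (EuclideanSpace ℝ (Fin d)) :=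
  (Measure.pi fun _ : Fin d => gaussianReal 0 1).map (MeasurableEquiv.toLp 2 (Fin d → ℝ))

/-- The sign function: `1` on positive reals, `-1` otherwise. -/
noncomputable def sgn (z : ℝ) : ℝ := if 0 < z then 1 else -1

/-- The ReLU activation. -/
noncomputable def relu (z : ℝ) : ℝ := max z 0

/-- The feature-decoupled network. -/
noncomputable def fDec {d k : ℕ} (μ : Fin k → EuclideanSpace ℝ (Fin d)) (s : Fin k → ℝ)
    (x : EuclideanSpace ℝ (Fin d)) : ℝ :=
  ∑ j ∈ univ.filter (fun j => s j = 1), relu (⟪μ j, x⟫ - d / 2) -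
    ∑ j ∈ univ.filter (fun j => s j = -1), relu (⟪μ j, x⟫ - d / 2)

open scoped NNReal ENNReal

namespace ProbabilityTheory

lemma hasSubgaussianMGF_id_gaussianReal (v : ℝ≥0) :
    HasSubgaussianMGF id v (gaussianReal 0 v) where
  integrable_exp_mul := integrable_exp_mul_gaussianReal
  mgf_le t := by simp [mgf_id_gaussianReal]

lemma hasSubgaussianMGF_inner_stdGaussian {E : Type*} [NormedAddCommGroup E]
    [InnerProductSpace ℝ E] [FiniteDimensional ℝ E] [MeasurableSpace E] [BorelSpace E] (c : E) :
    HasSubgaussianMGF (fun x ↦ ⟪c, x⟫) (‖c‖₊ ^ 2) (stdGaussian E) := by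
  have hmap : (stdGaussian E).map (innerSL ℝ c) = gaussianReal 0 (‖c‖₊ ^ 2) := by
    rw [IsGaussian.map_eq_gaussianReal, integral_strongDual_stdGaussian,
      variance_dual_stdGaussian, innerSL_apply_norm]
    congr
    ext; simp
  exact (HasSubgaussianMGF.id_map_iff (by fun_prop)).1
    (hmap ▸ hasSubgaussianMGF_id_gaussianReal _)

namespace HasSubgaussianMGF

variable {Ω : Type*} {mΩ : MeasurableSpace Ω} {μ : Measure Ω} {X : Ω → ℝ} {c : ℝ≥0}

lemma measureReal_abs_ge_le (h : HasSubgaussianMGF X c μ) {ε : ℝ} (hε : 0 ≤ ε) :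
    μ.real {ω | ε ≤ |X ω|} ≤ 2 * exp (-ε ^ 2 / (2 * c)) := by
  have : IsFiniteMeasure μ :=
    (integrable_const_iff_isFiniteMeasure one_ne_zero).1 (by simpa using h.integrable_exp_mul 0)
  calc μ.real {ω | ε ≤ |X ω|} ≤ μ.real ({ω | ε ≤ X ω} ∪ {ω | ε ≤ (-X) ω}) := by
        refine measureReal_mono fun ω (hω : ε ≤ |X ω|) ↦ ?_
        rcases le_abs'.mp hω with hneg | hpos
        · exact Or.inr (by simp only [Set.mem_ofPred_eq, Pi.neg_apply]; linarith)
        · exact Or.inl hpos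
    _ ≤ μ.real {ω | ε ≤ X ω} + μ.real {ω | ε ≤ (-X) ω} := measureReal_union_le _ _
    _ ≤ 2 * exp (-ε ^ 2 / (2 * c)) := by
        linarith [h.measure_ge_le hε, h.neg.measure_ge_le hε]

end HasSubgaussianMGF

lemma measure_forall_abs_lt_ge_of_hasSubgaussianMGF {Ω ι : Type*} {mΩ : MeasurableSpace Ω}
    {μ : Measure Ω} [IsProbabilityMeasure μ] [Fintype ι] {X : ι → Ω → ℝ} {c : ℝ≥0}
    (hX : ∀ i, HasSubgaussianMGF (X i) c μ) {ε : ℝ} (hε : 0 ≤ ε) :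
    ENNReal.ofReal (1 - 2 * Fintype.card ι * exp (-ε ^ 2 / (2 * c))) ≤
      μ {ω | ∀ i, |X i ω| < ε} := by
  set S := {ω | ∀ i, |X i ω| < ε}
  have hSc : μ.real Sᶜ ≤ 2 * Fintype.card ι * exp (-ε ^ 2 / (2 * c)) :=
    calc μ.real Sᶜ = μ.real (⋃ i, {ω | ε ≤ |X i ω|}) := by congr 1; ext; simp [S]
      _ ≤ ∑ i, μ.real {ω | ε ≤ |X i ω|} := measureReal_iUnion_fintype_le _
      _ ≤ ∑ _i : ι, 2 * exp (-ε ^ 2 / (2 * c)) :=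
        Finset.sum_le_sum fun i _ ↦ (hX i).measureReal_abs_ge_le hε
      _ = 2 * Fintype.card ι * exp (-ε ^ 2 / (2 * c)) := by simp; ring
  calc ENNReal.ofReal (1 - 2 * Fintype.card ι * exp (-ε ^ 2 / (2 * c)))
      ≤ ENNReal.ofReal (μ.real S) := by
        refine ENNReal.ofReal_le_ofReal ?_
        have := measureReal_union_le (μ := μ) S Sᶜ
        rw [Set.union_compl_self, probReal_univ] at this
        linarith
    _ = μ S := ofReal_measureReal

end ProbabilityTheory

lemma stdGaussian_eq_stdGaussian_euclideanSpace (d : ℕ) :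
    stdGaussian d = ProbabilityTheory.stdGaussian (EuclideanSpace ℝ (Fin d)) :=
  map_pi_eq_stdGaussian

lemma sgn_mul_of_pos {a b : ℝ} (ha : a = 1 ∨ a = -1) (hb : 0 < b) : sgn (a * b) = a := by
  rcases ha with rfl | rfl <;> simp [sgn, hb, hb.le]

section fDec

variable {d k : ℕ} {μ : Fin k → EuclideanSpace ℝ (Fin d)} {s : Fin k → ℝ}

lemma fDec_eq_sum (hs : ∀ j, s j = 1 ∨ s j = -1) (x : EuclideanSpace ℝ (Fin d)) :
    fDec μ s x = ∑ j, s j * relu (⟪μ j, x⟫ - d / 2) := by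
  rw [fDec, sum_filter, sum_filter, ← sum_sub_distrib]
  refine sum_congr rfl fun j _ ↦ ?_
  rcases hs j with h | h <;> norm_num [h]

lemma sgn_fDec_of_forall_ne (hs : ∀ j, s j = 1 ∨ s j = -1) {x : EuclideanSpace ℝ (Fin d)}
    {J : Fin k} (hJ : d / 2 < ⟪μ J, x⟫) (hj : ∀ j ≠ J, ⟪μ j, x⟫ ≤ d / 2) :
    sgn (fDec μ s x) = s J := by
  rw [fDec_eq_sum hs,
    sum_eq_single_of_mem J (mem_univ J) fun j _ hjJ ↦ by simp [relu, hj j hjJ],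
    relu, max_eq_left (by linarith)]
  exact sgn_mul_of_pos (hs J) (by linarith)

lemma sgn_fDec_add_of_abs_inner_lt (hs : ∀ j, s j = 1 ∨ s j = -1)
    (horth : ∀ i j, i ≠ j → ⟪μ i, μ j⟫ = 0) {J : Fin k} (hJ : ‖μ J‖ = √d)
    {η : EuclideanSpace ℝ (Fin d)} (hη : ∀ j, |⟪μ j, η⟫| < d / 2) :
    sgn (fDec μ s (μ J + η)) = s J := by
  refine sgn_fDec_of_forall_ne hs ?_ fun j hj ↦ ?_ <;> rw [inner_add_right]
  · rw [real_inner_self_eq_norm_sq, hJ, sq_sqrt (Nat.cast_nonneg d)]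
    linarith [neg_abs_le ⟪μ J, η⟫, hη J]
  · rw [horth j J hj]
    linarith [le_abs_self ⟪μ j, η⟫, hη j]

lemma sgn_fDec_add_add_of_abs_inner_lt (hs : ∀ j, s j = 1 ∨ s j = -1)
    (hnorm : ∀ j, ‖μ j‖ = √d) (horth : ∀ i j, i ≠ j → ⟪μ i, μ j⟫ = 0) (J : Fin k)
    {ξ : EuclideanSpace ℝ (Fin d)} (hξ : ∀ j, |⟪μ j, ξ⟫| < d / 6)
    {ρ : EuclideanSpace ℝ (Fin d)} (hρ : ‖ρ‖ ≤ √d / 3) :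
    sgn (fDec μ s (μ J + ξ + ρ)) = s J := by
  rw [add_assoc]
  refine sgn_fDec_add_of_abs_inner_lt hs horth (hnorm J) fun j ↦ ?_
  have hρj : |⟪μ j, ρ⟫| ≤ d / 3 :=
    calc |⟪μ j, ρ⟫| ≤ ‖μ j‖ * ‖ρ‖ := abs_real_inner_le_norm _ _
      _ ≤ √d * (√d / 3) := by rw [hnorm]; gcongr
      _ = d / 3 := by rw [← mul_div_assoc, mul_self_sqrt (Nat.cast_nonneg d)]
  calc |⟪μ j, ξ + ρ⟫| ≤ |⟪μ j, ξ⟫| + |⟪μ j, ρ⟫| := by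
        rw [inner_add_right]; exact abs_add_le _ _
    _ < d / 2 := by linarith [hξ j]

end fDec

lemma isProbabilityMeasure_inv_smul_count {k : ℕ} (hk : k ≠ 0) :
    IsProbabilityMeasure ((k : ℝ≥0∞)⁻¹ • (Measure.count : Measure (Fin k))) := by
  constructor
  rw [Measure.smul_apply, Measure.count_univ, ENat.card_eq_coe_fintype_card,
    ENat.toENNReal_coe, Fintype.card_fin, smul_eq_mul]
  exact ENNReal.inv_mul_cancel (Nat.cast_ne_zero.mpr hk) (ENNReal.natCast_ne_top k)

theorem featureDecoupled_robust_general (d k : ℕ) (hk : 1 ≤ k)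
    (hlog : 6 * Real.log d < Real.sqrt d)
    (μ : Fin k → EuclideanSpace ℝ (Fin d))
    (hnorm : ∀ j, ‖μ j‖ = Real.sqrt d)
    (horth : ∀ i j, i ≠ j → ⟪μ i, μ j⟫ = 0)
    (s : Fin k → ℝ) (hs : ∀ j, s j = 1 ∨ s j = -1) :
    ENNReal.ofReal (1 - 2 * k * (d : ℝ) ^ (-(Real.log d) / 2)) ≤
      (((k : ENNReal)⁻¹ • (Measure.count : Measure (Fin k))).prod (stdGaussian d))
        {p : Fin k × EuclideanSpace ℝ (Fin d) |
          ∀ ρ : EuclideanSpace ℝ (Fin d), ‖ρ‖ ≤ Real.sqrt d / 3 →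
            sgn (fDec μ s (μ p.1 + p.2 + ρ)) = s p.1} := by
  have hd_pos : (0 : ℝ) < d := Nat.cast_pos.2 (Nat.pos_of_ne_zero fun h ↦ by simp [h] at hlog)
  have hε : √d * log d < d / 6 := by nlinarith [sqrt_pos.2 hd_pos, mul_self_sqrt hd_pos.le]
  have hvar : ∀ j, ‖μ j‖₊ ^ 2 = (d : ℝ≥0) := fun j ↦ by
    ext; simp [hnorm j, sq_sqrt hd_pos.le]
  have hgood := measure_forall_abs_lt_ge_of_hasSubgaussianMGF
    (fun j ↦ hvar j ▸ hasSubgaussianMGF_inner_stdGaussian (μ j))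
    (mul_nonneg (sqrt_nonneg d) (log_natCast_nonneg d))
  have htail : exp (-(√d * log d) ^ 2 / (2 * (d : ℝ≥0))) = (d : ℝ) ^ (-log d / 2) := by
    rw [rpow_def_of_pos hd_pos, mul_pow, sq_sqrt hd_pos.le, NNReal.coe_natCast]
    congr 1
    field_simp
  rw [htail, Fintype.card_fin] at hgood
  set G := {ξ : EuclideanSpace ℝ (Fin d) | ∀ j, |⟪μ j, ξ⟫| < √d * log d}
  have hrobust : Set.univ ×ˢ G ⊆ {p : Fin k × EuclideanSpace ℝ (Fin d) |
      ∀ ρ : EuclideanSpace ℝ (Fin d), ‖ρ‖ ≤ √d / 3 →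
        sgn (fDec μ s (μ p.1 + p.2 + ρ)) = s p.1} :=
    fun p hp ρ hρ ↦
      sgn_fDec_add_add_of_abs_inner_lt hs hnorm horth p.1 (fun j ↦ (hp.2 j).trans hε) hρ
  have := isProbabilityMeasure_inv_smul_count (by omega : k ≠ 0)
  rw [stdGaussian_eq_stdGaussian_euclideanSpace]
  calc _ ≤ ProbabilityTheory.stdGaussian _ G := hgood
    _ = (((k : ℝ≥0∞)⁻¹ • Measure.count).prod (ProbabilityTheory.stdGaussian _))
          (Set.univ ×ˢ G) := by
      rw [Measure.prod_prod, measure_univ, one_mul]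
    _ ≤ _ := measure_mono hrobust

theorem featureDecoupled_robust (d k : ℕ) (hd : 2 ≤ d) (hk : 1 ≤ k)
    (hlog : 6 * Real.log d < Real.sqrt d)
    (μ : Fin k → EuclideanSpace ℝ (Fin d))
    (hnorm : ∀ j, ‖μ j‖ = Real.sqrt d)
    (horth : ∀ i j, i ≠ j → ⟪μ i, μ j⟫ = 0)
    (s : Fin k → ℝ) (hs : ∀ j, s j = 1 ∨ s j = -1) :
    ENNReal.ofReal (1 - 2 * k * (d : ℝ) ^ (-(Real.log d) / 2)) ≤
      (((k : ENNReal)⁻¹ • (Measure.count : Measure (Fin k))).prod (stdGaussian d))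
        {p : Fin k × EuclideanSpace ℝ (Fin d) |
          ∀ ρ : EuclideanSpace ℝ (Fin d), ‖ρ‖ ≤ Real.sqrt d / 3 →
            sgn (fDec μ s (μ p.1 + p.2 + ρ)) = s p.1} :=
  featureDecoupled_robust_general d k hk hlog μ hnorm horth s hs
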